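/- If there exists a rate assignment ρ on G(Φ) such that for every clause C_j the minimum delay from s_j to t_j is at most 3, then Φ is satisfiable; in fact, the truth assignment setting x_i to True exactly when ρ(u_i,v_i) = 1 satisfies every clause of Φ. -/

import Mathlib

open scoped ENNReal

/-- The nodes of the graph `G(Φ)` built from a 3-CNF formula with `n` variables and `m`
clauses: nodes `u i, v i, w i` for each variable `x i`, and `s j, t j` for each clause. -/
inductive CNode (n m : ℕ) where
  | u : Fin n → CNode n m
  | v : Fin n → CNode n m
  | w : Fin n → CNode n m
  | s : Fin m → CNode n m
  | t : Fin m → CNode n m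
  deriving DecidableEq, Fintype

/-- The edges of `G(Φ)`, where the clause `Φ j` is a set of literals `(i, b)` (`b = true`
for a positive occurrence of variable `i`, `b = false` for a negative one): edges
`(u i, v i)` and `(u i, w i)` for each variable `i`; for each clause `j` and each variable
`i` occurring in it, the edge `(s j, u i)`; the edge `(v i, t j)` if `x i` occurs positively
in clause `j`; and the edge `(w i, t j)` if `x i` occurs negatively in clause `j`. -/
def cnfEdge {n m : ℕ} (Φ : Fin m → Finset (Fin n × Bool)) :
    CNode n m → CNode n m → Prop
  | .u i, .v i' => i = i'
  | .u i, .w i' => i = i'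
  | .s j, .u i => ∃ b, (i, b) ∈ Φ j
  | .v i, .t j => (i, true) ∈ Φ j
  | .w i, .t j => (i, false) ∈ Φ j
  | _, _ => False

/-- A rate assignment on `G(Φ)`: a function `ρ` into `[0,1]`, supported on the edges of
`G(Φ)`, such that for every node the sum of `ρ` over the edges leaving that node is at
most `1`. -/
def IsRateAssignment {n m : ℕ} (Φ : Fin m → Finset (Fin n × Bool))
    (ρ : CNode n m → CNode n m → ℝ) : Prop :=
  (∀ a b, 0 ≤ ρ a b ∧ ρ a b ≤ 1) ∧
  (∀ a b, ¬ cnfEdge Φ a b → ρ a b = 0) ∧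
  (∀ a : CNode n m, ∑ b : CNode n m, ρ a b ≤ 1)

/-- The delay of an edge `(a, b)` is `1 / ρ (a, b)`, interpreted as `+∞` when
`ρ (a, b) = 0` (values in `ℝ≥0∞`). -/
noncomputable def edgeDelay {n m : ℕ} (ρ : CNode n m → CNode n m → ℝ)
    (a b : CNode n m) : ℝ≥0∞ :=
  (ENNReal.ofReal (ρ a b))⁻¹

/-- A directed path (with at least one edge) from `x` to `y`, as its list of vertices. -/
def IsDipath {V : Type*} (E : V → V → Prop) (x y : V) (p : List V) : Prop :=
  2 ≤ p.length ∧ p.head? = some x ∧ p.getLast? = some y ∧ p.Chain' E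

/-- The delay of a directed path: the sum of the delays of its edges (in `ℝ≥0∞`). -/
noncomputable def pathDelay {n m : ℕ} (ρ : CNode n m → CNode n m → ℝ)
    (p : List (CNode n m)) : ℝ≥0∞ :=
  ((p.zip p.tail).map fun q => edgeDelay ρ q.1 q.2).sum

/-- The minimum delay from `x` to `y`: the infimum of the path delays over all directed
paths from `x` to `y` (equal to `+∞` if there is none). -/
noncomputable def minDelay {n m : ℕ} (Φ : Fin m → Finset (Fin n × Bool))
    (ρ : CNode n m → CNode n m → ℝ) (x y : CNode n m) : ℝ≥0∞ :=
  sInf {d : ℝ≥0∞ | ∃ p, IsDipath (cnfEdge Φ) x y p ∧ pathDelay ρ p = d}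

/-!
Rates are at most `1`, so every edge has delay at least `1`. The only directed paths from `s j`
to `t j` are `s j → u i → v i → t j` and `s j → u i → w i → t j`, one for each literal of the
clause. A path of delay at most `3` thus has delay `1`, i.e. rate `1`, on its middle edge. Rate `1`
on `(u i, w i)` leaves rate `0` for `(u i, v i)` by the out-rate bound at `u i`, so in either case
the literal is true under the assignment.
-/

def CNode.lit {n m : ℕ} (i : Fin n) : Bool → CNode n m
  | true => .v i
  | false => .w i

def literalPath {n m : ℕ} (j : Fin m) (l : Fin n × Bool) : List (CNode n m) :=
  [.s j, .u l.1, .lit l.1 l.2, .t j]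

section Paths

variable {n m : ℕ} {Φ : Fin m → Finset (Fin n × Bool)} {j : Fin m}

theorem isDipath_literalPath {l : Fin n × Bool} (hl : l ∈ Φ j) :
    IsDipath (cnfEdge Φ) (.s j) (.t j) (literalPath j l) := by
  obtain ⟨i, b⟩ := l
  refine ⟨by simp [literalPath], rfl, rfl, ?_⟩
  show List.IsChain _ _
  cases b <;> simp [literalPath, CNode.lit, cnfEdge, hl]

theorem exists_eq_literalPath_of_isDipath {p : List (CNode n m)}
    (h : IsDipath (cnfEdge Φ) (.s j) (.t j) p) : ∃ l ∈ Φ j, p = literalPath j l := by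
  obtain ⟨hlen, hhead, hlast, hchain⟩ := h
  change List.IsChain _ _ at hchain
  -- Split by the number of edges: with fewer than three, `t j` is not reached; with more, an
  -- edge would leave `t j`.
  rcases p with _ | ⟨a, _ | ⟨b, _ | ⟨c, _ | ⟨d, _ | ⟨e, rest⟩⟩⟩⟩⟩ <;>
    simp only [List.length_cons, List.length_nil, List.head?_cons, List.head?_nil, reduceCtorEq,
      List.getLast?_cons_cons, List.getLast?_singleton, Option.some.injEq,
      List.isChain_cons_cons] at hlen hhead hlast hchain <;>
    try omega
  · subst hhead hlast
    simp [cnfEdge] at hchain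
  · subst hhead hlast
    cases b <;> simp [cnfEdge] at hchain
  · subst hhead hlast
    obtain ⟨h₁, h₂, h₃, -⟩ := hchain
    cases b <;> cases c <;> simp only [cnfEdge] at h₁ h₂ h₃ <;> subst h₂
    exacts [⟨(_, true), h₃, rfl⟩, ⟨(_, false), h₃, rfl⟩]
  · subst hhead
    obtain ⟨h₁, h₂, h₃, h₄, -⟩ := hchain
    cases b <;> cases c <;> cases d <;> cases e <;> simp [cnfEdge] at h₁ h₂ h₃ h₄

theorem setOf_isDipath_eq_image_literalPath :
    {p | IsDipath (cnfEdge Φ) (.s j) (.t j) p} = literalPath j '' Φ j := by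
  ext p
  constructor
  · intro hp
    obtain ⟨l, hl, rfl⟩ := exists_eq_literalPath_of_isDipath hp
    exact ⟨l, hl, rfl⟩
  · rintro ⟨l, hl, rfl⟩
    exact isDipath_literalPath hl

theorem minDelay_eq_inf_pathDelay_literalPath (ρ : CNode n m → CNode n m → ℝ) :
    minDelay Φ ρ (.s j) (.t j) = (Φ j).inf fun l => pathDelay ρ (literalPath j l) := by
  change sInf (pathDelay ρ '' {p | IsDipath (cnfEdge Φ) (.s j) (.t j) p}) = _
  rw [setOf_isDipath_eq_image_literalPath, ← Set.image_comp, sInf_image,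
    Finset.inf_eq_iInf]
  rfl

end Paths

theorem ENNReal.le_one_of_add_add_le_three {x y z : ℝ≥0∞} (hx : 1 ≤ x) (hz : 1 ≤ z)
    (h : x + y + z ≤ 3) : y ≤ 1 := by
  refine ENNReal.le_of_add_le_add_right (a := 2) (by norm_num) ?_
  calc y + 2 = 1 + y + 1 := by ring
    _ ≤ x + y + z := by gcongr
    _ ≤ 1 + 2 := by norm_num [h]

theorem eq_zero_of_sum_le_one_of_eq_one {ι : Type*} [Fintype ι] {f : ι → ℝ}
    (hf : ∀ i, 0 ≤ f i) (hsum : ∑ i, f i ≤ 1) {a b : ι} (hab : a ≠ b) (ha : f a = 1) :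
    f b = 0 := by
  have := Finset.add_le_sum (fun i _ => hf i) (Finset.mem_univ a) (Finset.mem_univ b) hab
  linarith [hf b]

section Rates

variable {n m : ℕ} {ρ : CNode n m → CNode n m → ℝ}

theorem one_le_edgeDelay {a b : CNode n m} (h : ρ a b ≤ 1) : 1 ≤ edgeDelay ρ a b :=
  ENNReal.one_le_inv.2 (ENNReal.ofReal_le_one.2 h)

theorem edgeDelay_le_one_iff {a b : CNode n m} : edgeDelay ρ a b ≤ 1 ↔ 1 ≤ ρ a b := by
  rw [edgeDelay, ENNReal.inv_le_one, ENNReal.one_le_ofReal]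

theorem pathDelay_literalPath (j : Fin m) (l : Fin n × Bool) :
    pathDelay ρ (literalPath j l) = edgeDelay ρ (.s j) (.u l.1) +
      edgeDelay ρ (.u l.1) (.lit l.1 l.2) + edgeDelay ρ (.lit l.1 l.2) (.t j) := by
  simp [pathDelay, literalPath, add_assoc]

theorem rate_eq_one_of_pathDelay_literalPath_le_three (hρ : ∀ a b, ρ a b ≤ 1) {j : Fin m}
    {l : Fin n × Bool} (h : pathDelay ρ (literalPath j l) ≤ 3) :
    ρ (.u l.1) (.lit l.1 l.2) = 1 := by
  rw [pathDelay_literalPath] at h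
  refine le_antisymm (hρ _ _) (edgeDelay_le_one_iff.1 ?_)
  exact ENNReal.le_one_of_add_add_le_three (one_le_edgeDelay (hρ _ _))
    (one_le_edgeDelay (hρ _ _)) h

theorem IsRateAssignment.rate_u_v_eq_one_iff {Φ : Fin m → Finset (Fin n × Bool)}
    (hρ : IsRateAssignment Φ ρ) {i : Fin n} {b : Bool} (h : ρ (.u i) (.lit i b) = 1) :
    ρ (.u i) (.v i) = 1 ↔ b = true := by
  cases b
  · have := eq_zero_of_sum_le_one_of_eq_one (fun c => (hρ.1 _ c).1) (hρ.2.2 (.u i))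
      (b := .v i) (by simp [CNode.lit]) h
    simp [this]
  · simpa [CNode.lit] using h

end Rates

theorem rate_assignment_gives_satisfying_assignment_general {n m : ℕ}
    (Φ : Fin m → Finset (Fin n × Bool))
    (ρ : CNode n m → CNode n m → ℝ) (hρ : IsRateAssignment Φ ρ)
    (hdel : ∀ j : Fin m, minDelay Φ ρ (CNode.s j) (CNode.t j) ≤ 3) :
    (∃ σ : Fin n → Bool, ∀ j : Fin m, ∃ l ∈ Φ j, σ l.1 = l.2) ∧
    (∀ j : Fin m, ∃ l ∈ Φ j,
      (ρ (CNode.u l.1) (CNode.v l.1) = 1 ↔ l.2 = true)) := by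
  have hlit : ∀ j, ∃ l ∈ Φ j, (ρ (.u l.1) (.v l.1) = 1 ↔ l.2 = true) := fun j => by
    have hle := hdel j
    rw [minDelay_eq_inf_pathDelay_literalPath, Finset.inf_le_iff (by simp)] at hle
    obtain ⟨l, hl, hdelay⟩ := hle
    exact ⟨l, hl, hρ.rate_u_v_eq_one_iff
      (rate_eq_one_of_pathDelay_literalPath_le_three (fun a b => (hρ.1 a b).2) hdelay)⟩
  refine ⟨⟨fun i => decide (ρ (.u i) (.v i) = 1), fun j => ?_⟩, hlit⟩
  obtain ⟨l, hl, hiff⟩ := hlit j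
  exact ⟨l, hl, by simp [hiff]⟩

/-- If there is a rate assignment `ρ` on `G(Φ)` such that for every clause `j` the minimum
delay from `s j` to `t j` is at most `3`, then `Φ` is satisfiable; in fact, the truth
assignment setting variable `i` to True exactly when `ρ (u i, v i) = 1` satisfies every
clause of `Φ` (i.e. every clause contains a literal `(i, b)` with
`(ρ (u i) (v i) = 1) ↔ b = true`). -/
theorem rate_assignment_gives_satisfying_assignment {n m : ℕ}
    (Φ : Fin m → Finset (Fin n × Bool))
    (hΦ : ∀ j, (Φ j).Nonempty ∧ (Φ j).card ≤ 3)
    (ρ : CNode n m → CNode n m → ℝ) (hρ : IsRateAssignment Φ ρ)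
    (hdel : ∀ j : Fin m, minDelay Φ ρ (CNode.s j) (CNode.t j) ≤ 3) :
    (∃ σ : Fin n → Bool, ∀ j : Fin m, ∃ l ∈ Φ j, σ l.1 = l.2) ∧
    (∀ j : Fin m, ∃ l ∈ Φ j,
      (ρ (CNode.u l.1) (CNode.v l.1) = 1 ↔ l.2 = true)) :=
  rate_assignment_gives_satisfying_assignment_general Φ ρ hρ hdel
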